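/- In an infinite sequence of reading lists $S_{(d_1,n_1)}, S_{(d_2,n_2)}, \dots$ (with parameter $M$) that forms an antichain under the reading list order, either the sequence $(n_i)$ is bounded or the sequence $(d_i)$ is bounded. -/

import Mathlib

/-- A reading list of type `(d, n)` with parameter `M`: a tuple `(S¹, …, Sⁿ)` where each
`Sⁱ` is a `d`-element subset of `[M·d] = {1, …, M·d}`. -/
structure ReadingList (M : ℕ) where
  d : ℕ
  n : ℕ
  S : Fin n → Finset ℕ
  subset_range : ∀ i, S i ⊆ Finset.Icc 1 (M * d)
  card_eq : ∀ i, (S i).card = d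

/-- The reading list order: `A ≤ B` iff there is a strictly increasing injection `f` on
indices and strictly increasing indices `k₁ < ⋯ < kₙ` with `f(Aⁱ) ⊆ B^{kᵢ}` for all `i`. -/
def ReadingList.le {M : ℕ} (A B : ReadingList M) : Prop :=
  ∃ (f : ℕ → ℕ) (k : Fin A.n → Fin B.n), StrictMono f ∧ StrictMono k ∧
    ∀ i, (A.S i).image f ⊆ B.S (k i)

/-! Let `A = g 0` and `m = M·d(A)`. If a later list `B` has `d(B) ≥ 2m` and `n(B) > n(A)·(2M)^m`,
then double counting the `m`-subsets of `[M·d(B)]` against the `n(B)` sets of `B`, each of which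
contains `C(d(B), m) ≥ C(M·d(B), m) / (2M)^m` of them, produces an `m`-set `T` lying in at least
`n(A)` sets of `B`; a strictly increasing map sending `[m]` onto `T` then witnesses `A ≤ B`.
By Higman's lemma the lists of degree `≤ 2m` are partially well ordered, so an antichain contains
only finitely many of them, and unbounded widths would produce such a `B`. -/

open Finset

theorem Nat.choose_mul_le_pow_mul_choose {M d m : ℕ} (h : 2 * m ≤ d) :
    (M * d).choose m ≤ (2 * M) ^ m * d.choose m := by
  have hMd : M * d ≤ 2 * M * (d + 1 - m) := by
    rw [mul_comm 2 M, mul_assoc]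
    exact Nat.mul_le_mul_left M (by omega)
  refine Nat.le_of_mul_le_mul_left ?_ m.factorial_pos
  calc m.factorial * (M * d).choose m = (M * d).descFactorial m :=
        (Nat.descFactorial_eq_factorial_mul_choose _ _).symm
    _ ≤ (M * d) ^ m := Nat.descFactorial_le_pow _ _
    _ ≤ (2 * M * (d + 1 - m)) ^ m := Nat.pow_le_pow_left hMd _
    _ = (2 * M) ^ m * (d + 1 - m) ^ m := Nat.mul_pow _ _ _
    _ ≤ (2 * M) ^ m * d.descFactorial m :=
        Nat.mul_le_mul_left _ (Nat.pow_sub_le_descFactorial _ _)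
    _ = m.factorial * ((2 * M) ^ m * d.choose m) := by
      rw [Nat.descFactorial_eq_factorial_mul_choose]; ring

theorem StrictMono.exists_extend_nat {m : ℕ} {u : Fin (m + 1) → ℕ} (hu : StrictMono u) :
    ∃ f : ℕ → ℕ, StrictMono f ∧ ∀ i : Fin (m + 1), f i = u i := by
  refine ⟨fun x => if hx : x ≤ m then u ⟨x, by omega⟩ else u (Fin.last m) + x,
    strictMono_nat_of_lt_succ fun x => ?_, fun i => by simp [Fin.is_le i]⟩
  by_cases hx : x + 1 ≤ m
  · simp only [dif_pos hx, dif_pos (show x ≤ m by omega)]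
    exact hu (Fin.mk_lt_mk.2 x.lt_succ_self)
  by_cases hxm : x = m
  · subst hxm
    simp [Fin.last]
  · simp only [dif_neg hx, dif_neg (show ¬x ≤ m by omega)]
    omega

theorem Finset.exists_strictMono_mapsTo_Icc_one_card {T : Finset ℕ} (hT : 0 ∉ T) :
    ∃ f : ℕ → ℕ, StrictMono f ∧ Set.MapsTo f ↑(Finset.Icc 1 #T) ↑T := by
  set t := (insert 0 T).orderEmbOfFin (card_insert_of_notMem hT)
  obtain ⟨f, hf, hft⟩ := t.strictMono.exists_extend_nat
  refine ⟨f, hf, fun x hx => ?_⟩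
  obtain ⟨hx1, hxT⟩ := mem_Icc.1 hx
  have hfx : f x = t ⟨x, by omega⟩ := hft ⟨x, by omega⟩
  have hpos : t ⟨0, by omega⟩ < t ⟨x, by omega⟩ := t.strictMono (Fin.mk_lt_mk.2 hx1)
  have hmem : t ⟨x, by omega⟩ ∈ insert 0 T := orderEmbOfFin_mem _ _ _
  rw [hfx]
  exact (mem_insert.1 hmem).resolve_left (by omega)

theorem Finset.sum_card_filter_subset_eq {ι α : Type*} [Fintype ι] [DecidableEq α]
    {U : Finset α} {S : ι → Finset α} {d : ℕ} (hSU : ∀ k, S k ⊆ U) (hS : ∀ k, #(S k) = d)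
    (m : ℕ) : ∑ T ∈ U.powersetCard m, #{k | T ⊆ S k} = Fintype.card ι * d.choose m := by
  calc ∑ T ∈ U.powersetCard m, #{k | T ⊆ S k}
      = ∑ k, #{T ∈ U.powersetCard m | T ⊆ S k} :=
        sum_card_bipartiteAbove_eq_sum_card_bipartiteBelow (fun T k => T ⊆ S k)
    _ = ∑ k, #((S k).powersetCard m) := by
        congr! 2 with k
        ext T
        simp only [mem_filter, mem_powersetCard]
        exact ⟨fun ⟨⟨_, hT⟩, hTS⟩ => ⟨hTS, hT⟩, fun ⟨hTS, hT⟩ => ⟨⟨hTS.trans (hSU k), hT⟩, hTS⟩⟩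
    _ = Fintype.card ι * d.choose m := by simp [card_powersetCard, hS]

theorem Finset.exists_mem_powersetCard_lt_card_filter_subset {ι α : Type*} [Fintype ι]
    [DecidableEq α] {U : Finset α} {S : ι → Finset α} {d m N : ℕ} (hSU : ∀ k, S k ⊆ U)
    (hS : ∀ k, #(S k) = d) (h : N * (#U).choose m < Fintype.card ι * d.choose m) :
    ∃ T ∈ U.powersetCard m, N < #{k | T ⊆ S k} := by
  apply exists_lt_of_sum_lt
  rwa [sum_const, card_powersetCard, smul_eq_mul, mul_comm, sum_card_filter_subset_eq hSU hS]

theorem Nat.exists_gt_and_lt_of_forall_exists_lt {v : ℕ → ℕ} (hv : ∀ N, ∃ i, N < v i)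
    (k N : ℕ) : ∃ j, k < j ∧ N < v j := by
  obtain ⟨j, hj⟩ := hv (max N ((range (k + 1)).sup v))
  refine ⟨j, ?_, lt_of_le_of_lt (le_max_left _ _) hj⟩
  by_contra hjk
  have := le_sup (f := v) (mem_range.2 (show j < k + 1 by omega))
  omega

namespace ReadingList

variable {M : ℕ}

theorem le_of_card_le_card_filter_subset {A B : ReadingList M} {T : Finset ℕ} (hT0 : 0 ∉ T)
    (hT : #T = M * A.d) (hk : A.n ≤ #{k | T ⊆ B.S k}) : A.le B := by
  obtain ⟨f, hf, hfT⟩ := exists_strictMono_mapsTo_Icc_one_card hT0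
  set k := ({k | T ⊆ B.S k} : Finset (Fin B.n)).orderEmbOfCardLe hk
  refine ⟨f, k, hf, k.strictMono, fun i => ?_⟩
  have hTk : T ⊆ B.S (k i) := (mem_filter.1 (orderEmbOfCardLe_mem _ hk i)).2
  rintro _ hb
  obtain ⟨a, ha, rfl⟩ := mem_image.1 hb
  exact hTk (hfT (mem_coe.2 (hT ▸ A.subset_range i ha)))

theorem le_of_mul_choose_lt {A B : ReadingList M}
    (h : A.n * (M * B.d).choose (M * A.d) < B.n * B.d.choose (M * A.d)) : A.le B := by
  obtain ⟨T, hT, hlt⟩ := exists_mem_powersetCard_lt_card_filter_subset B.subset_range B.card_eq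
    (by simpa using h)
  rw [mem_powersetCard] at hT
  exact le_of_card_le_card_filter_subset (fun h0 => by simpa using hT.1 h0) hT.2 hlt.le

theorem le_of_two_mul_le_d {A B : ReadingList M} (hd : 2 * (M * A.d) ≤ B.d)
    (hn : A.n * (2 * M) ^ (M * A.d) < B.n) : A.le B := by
  refine le_of_mul_choose_lt ?_
  calc A.n * (M * B.d).choose (M * A.d)
      ≤ A.n * ((2 * M) ^ (M * A.d) * B.d.choose (M * A.d)) :=
        Nat.mul_le_mul_left _ (Nat.choose_mul_le_pow_mul_choose hd)
    _ = A.n * (2 * M) ^ (M * A.d) * B.d.choose (M * A.d) := (mul_assoc _ _ _).symm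
    _ < B.n * B.d.choose (M * A.d) := Nat.mul_lt_mul_of_pos_right hn (Nat.choose_pos (by omega))

theorem le_of_sublistForall₂ {A B : ReadingList M}
    (h : List.SublistForall₂ (· ≤ ·) (List.ofFn A.S) (List.ofFn B.S)) : A.le B := by
  obtain ⟨l, hAl, hlB⟩ := List.sublistForall₂_iff.1 h
  obtain ⟨φ, hφ⟩ := List.sublist_iff_exists_fin_orderEmbedding_get_eq.1 hlB
  have hl : A.n = l.length := by simpa using hAl.length_eq
  refine ⟨id, fun i => Fin.cast (by simp) (φ (Fin.cast hl i)), strictMono_id,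
    fun i j hij => φ.strictMono hij, fun i => ?_⟩
  have hAi : A.S i ⊆ l.get (Fin.cast hl i) := by simpa using hAl.get (i := i) (by simp) (by omega)
  rw [image_id]
  exact hAi.trans ((hφ _).trans (List.get_ofFn _ _)).le

theorem partiallyWellOrderedOn_setOf_d_le (D : ℕ) :
    {A : ReadingList M | A.d ≤ D}.PartiallyWellOrderedOn ReadingList.le := by
  have hsets : (Set.Iic (Finset.Icc 1 (M * D))).PartiallyWellOrderedOn (· ≤ ·) :=
    (Set.finite_Iic _).partiallyWellOrderedOn
  have hlists := hsets.partiallyWellOrderedOn_sublistForall₂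
  rw [Set.partiallyWellOrderedOn_iff_exists_lt]
  intro g hg
  obtain ⟨i, j, hij, hle⟩ := hlists.exists_lt (f := fun i => List.ofFn (g i).S) fun i s hs => by
    obtain ⟨k, rfl⟩ := List.mem_ofFn.1 hs
    exact ((g i).subset_range k).trans (Icc_subset_Icc_right (Nat.mul_le_mul_left M (hg i)))
  exact ⟨i, j, hij, le_of_sublistForall₂ hle⟩

end ReadingList

theorem antichain_n_or_d_bounded_general (M : ℕ) (g : ℕ → ReadingList M)
    (h : ∀ i j : ℕ, i < j → ¬ (g i).le (g j) ∧ ¬ (g j).le (g i)) :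
    (∃ B : ℕ, ∀ i, (g i).n ≤ B) ∨ (∃ B : ℕ, ∀ i, (g i).d ≤ B) := by
  refine Or.inl ?_
  by_contra! hn
  set m := M * (g 0).d
  obtain ⟨k, hk⟩ := (ReadingList.partiallyWellOrderedOn_setOf_d_le (2 * m)).exists_notMem_of_gt
    fun i j hij => (h i j hij).1
  obtain ⟨j, hkj, hnj⟩ := Nat.exists_gt_and_lt_of_forall_exists_lt hn k ((g 0).n * (2 * M) ^ m)
  have hdj : 2 * m ≤ (g j).d := (not_le.1 (hk j hkj)).le
  exact (h 0 j (by omega)).1 (ReadingList.le_of_two_mul_le_d hdj hnj)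

/-- In an infinite antichain of reading lists, either the widths `nᵢ` are bounded or the
degrees `dᵢ` are bounded. -/
theorem antichain_n_or_d_bounded (M : ℕ) (hM : 1 ≤ M) (g : ℕ → ReadingList M)
    (h : ∀ i j : ℕ, i < j → ¬ (g i).le (g j) ∧ ¬ (g j).le (g i)) :
    (∃ B : ℕ, ∀ i, (g i).n ≤ B) ∨ (∃ B : ℕ, ∀ i, (g i).d ≤ B) :=
  antichain_n_or_d_bounded_general M g h
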